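/- If a locally integrable function g : (0,∞) → ℂ satisfies g(u₁)g(u₂) = K(u₁+u₂) for almost all u₁,u₂ > 0 and some function K, and g is not a.e. zero, then there exist complex constants A, B such that g(u) = A·exp(−B·u) for almost every u > 0. -/

import Mathlib

open MeasureTheory Set Filter
open scoped Topology

/-!
Eliminating `K`, the equation gives `g (u + v) * g w = g u * g (v + w)` for almost every
`(u, v, w)`. Integrating in `w` over an interval `[a, b]` with `∫ g ≠ 0` yields
`g (u + v) = g u * H v` almost everywhere, where `H v = (∫_a^b g (v + w) dw) / ∫_a^b g` is
continuous. Since the left side is symmetric in `u` and `v`, `g = c * H` almost everywhere with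
`c ≠ 0`, so `H (u + v) = H u * H v` almost everywhere, hence everywhere by continuity. Averaging
this equation once more shows that `H` is differentiable with `H' = B * H`, so `H` is a multiple
of `exp (B u)`.
-/

theorem LinearMap.quasiMeasurePreserving_of_surjective {E F : Type*}
    [NormedAddCommGroup E] [NormedSpace ℝ E] [MeasurableSpace E] [BorelSpace E]
    [FiniteDimensional ℝ E] [NormedAddCommGroup F] [NormedSpace ℝ F] [MeasurableSpace F]
    [BorelSpace F] {μ : Measure E} {ν : Measure F} [μ.IsAddHaarMeasure] [ν.IsAddHaarMeasure]
    (L : E →ₗ[ℝ] F) (hL : Function.Surjective L) : Measure.QuasiMeasurePreserving L μ ν := by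
  obtain ⟨c, -, hc⟩ := L.exists_map_addHaar_eq_smul_addHaar μ ν hL
  exact ⟨L.continuous_of_finiteDimensional.measurable, hc ▸ Measure.smul_absolutelyContinuous⟩

theorem ae_comp_add {P : ℝ → Prop} (h : ∀ᵐ x, P x) : ∀ᵐ p : ℝ × ℝ, P (p.1 + p.2) :=
  ((LinearMap.fst ℝ ℝ ℝ + LinearMap.snd ℝ ℝ ℝ).quasiMeasurePreserving_of_surjective
    (fun x => ⟨(x, 0), by simp⟩)).ae h

theorem ae_pos_imp_eq_zero_of_ae_add {E : Type*} [Zero E] {g : ℝ → E}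
    (h : ∀ᵐ p : ℝ × ℝ, 0 < p.1 → 0 < p.2 → g (p.1 + p.2) = 0) : ∀ᵐ x, 0 < x → g x = 0 := by
  have hshear : ∀ᵐ p : ℝ × ℝ, 0 < p.1 - p.2 → 0 < p.2 → g (p.1 - p.2 + p.2) = 0 :=
    ((LinearMap.fst ℝ ℝ ℝ - LinearMap.snd ℝ ℝ ℝ).prod (LinearMap.snd ℝ ℝ ℝ)
      |>.quasiMeasurePreserving_of_surjective (fun p => ⟨(p.1 + p.2, p.2), by simp⟩)).ae h
  filter_upwards [Measure.ae_ae_of_ae_prod hshear] with x hx hx0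
  by_contra hgx
  have hnull : volume (Ioo 0 x) = 0 := measure_eq_zero_iff_ae_notMem.2 <|
    hx.mono fun v hv hmem => hgx (by simpa using hv (sub_pos.2 hmem.2) hmem.1)
  rw [Real.volume_Ioo, ENNReal.ofReal_eq_zero] at hnull
  linarith

theorem ae_mul_add_eq_mul_add {M : Type*} [Mul M] {g K : ℝ → M}
    (hfe : ∀ᵐ p : ℝ × ℝ, 0 < p.1 → 0 < p.2 → g p.1 * g p.2 = K (p.1 + p.2)) :
    ∀ᵐ x : (ℝ × ℝ) × ℝ, 0 < x.1.1 → 0 < x.1.2 → 0 < x.2 →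
      g (x.1.1 + x.1.2) * g x.2 = g x.1.1 * g (x.1.2 + x.2) := by
  -- instance search does not find this for the nested product
  have : (volume : Measure ((ℝ × ℝ) × ℝ)).IsAddHaarMeasure :=
    Measure.prod.instIsAddHaarMeasure _ _
  have h₁ : ∀ᵐ x : (ℝ × ℝ) × ℝ, 0 < x.1.1 + x.1.2 → 0 < x.2 →
      g (x.1.1 + x.1.2) * g x.2 = K (x.1.1 + x.1.2 + x.2) :=
    (((LinearMap.fst ℝ ℝ ℝ + LinearMap.snd ℝ ℝ ℝ).comp (LinearMap.fst ℝ (ℝ × ℝ) ℝ)).prod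
      (LinearMap.snd ℝ (ℝ × ℝ) ℝ) |>.quasiMeasurePreserving_of_surjective
        (fun p => ⟨((p.1, 0), p.2), by simp⟩)).ae hfe
  have h₂ : ∀ᵐ x : (ℝ × ℝ) × ℝ, 0 < x.1.1 → 0 < x.1.2 + x.2 →
      g x.1.1 * g (x.1.2 + x.2) = K (x.1.1 + (x.1.2 + x.2)) :=
    (((LinearMap.fst ℝ ℝ ℝ).comp (LinearMap.fst ℝ (ℝ × ℝ) ℝ)).prod
      ((LinearMap.snd ℝ ℝ ℝ).comp (LinearMap.fst ℝ (ℝ × ℝ) ℝ) + LinearMap.snd ℝ (ℝ × ℝ) ℝ)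
        |>.quasiMeasurePreserving_of_surjective (fun p => ⟨((p.1, p.2), 0), by simp⟩)).ae hfe
  filter_upwards [h₁, h₂] with x h₁ h₂ hu hv hw
  rw [h₁ (add_pos hu hv) hw, h₂ hu (add_pos hv hw), add_assoc]

section

variable {E : Type*} [NormedAddCommGroup E] [NormedSpace ℝ E]

theorem ae_pos_imp_eq_zero_of_intervalIntegral_eq_zero [CompleteSpace E] {g : ℝ → E}
    (hloc : LocallyIntegrableOn g (Ioi 0)) (h : ∀ a > 0, ∀ b > 0, ∫ t in a..b, g t = 0) :
    ∀ᵐ x, 0 < x → g x = 0 := by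
  have hpiece : ∀ n : ℕ, ∀ᵐ x, x ∈ Icc (1 / (n + 1) : ℝ) (n + 1) → g x = 0 := by
    intro n
    have ha : (0 : ℝ) < 1 / (n + 1) := by positivity
    have hsub : uIcc (1 / (n + 1) : ℝ) (n + 1) ⊆ Ioi 0 :=
      ordConnected_Ioi.uIcc_subset ha (by positivity : (0 : ℝ) < n + 1)
    have hint := (hloc.integrableOn_compact_subset hsub isCompact_uIcc).intervalIntegrable
    filter_upwards [hint.ae_hasDerivAt_integral] with x hx hmem
    replace hmem := Icc_subset_uIcc hmem
    have hprim : (fun y => ∫ t in (1 / (n + 1) : ℝ)..y, g t) =ᶠ[𝓝 x] fun _ => 0 :=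
      (eventually_gt_nhds (hsub hmem)).mono fun y hy => h _ ha y hy
    exact (hx hmem _ left_mem_uIcc).unique ((hasDerivAt_const x 0).congr_of_eventuallyEq hprim)
  filter_upwards [ae_all_iff.2 hpiece] with x hx hx0
  obtain ⟨n, hn⟩ := exists_nat_gt (max x x⁻¹)
  refine hx n ⟨?_, ?_⟩
  · rw [div_le_iff₀ (by positivity)]
    nlinarith [le_max_right x x⁻¹, mul_inv_cancel₀ hx0.ne']
  · linarith [le_max_left x x⁻¹]

theorem MeasureTheory.LocallyIntegrableOn.continuousOn_primitive {g : ℝ → E} {s : Set ℝ} {a : ℝ}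
    (hloc : LocallyIntegrableOn g s) (hs : IsOpen s) (hs' : s.OrdConnected) (ha : a ∈ s) :
    ContinuousOn (fun x => ∫ t in a..x, g t) s := by
  intro x hx
  obtain ⟨b₁, b₂, hx', hnhds, hsub⟩ := exists_Icc_mem_subset_of_mem_nhds (hs.mem_nhds hx)
  have hb₁ : b₁ ∈ s := hsub (left_mem_Icc.2 (hx'.1.trans hx'.2))
  have hb₂ : b₂ ∈ s := hsub (right_mem_Icc.2 (hx'.1.trans hx'.2))
  have hint := (hloc.integrableOn_compact_subset
    (hs'.uIcc_subset (min_rec' (· ∈ s) ha hb₁) (max_rec' (· ∈ s) ha hb₂))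
    isCompact_uIcc).intervalIntegrable
  exact ((intervalIntegral.continuousWithinAt_primitive (measure_singleton x) hint).continuousAt
    hnhds).continuousWithinAt

end

section

variable {𝕜 : Type*} [RCLike 𝕜]

theorem continuousOn_intervalIntegral_comp_add {g : ℝ → 𝕜} {a b : ℝ}
    (hloc : LocallyIntegrableOn g (Ioi 0)) (ha : 0 < a) (hb : 0 < b) :
    ContinuousOn (fun v => ∫ w in a..b, g (v + w)) (Ioi 0) := by
  have hΦ := hloc.continuousOn_primitive isOpen_Ioi ordConnected_Ioi ha
  have hint : ∀ x ∈ Ioi (0 : ℝ), IntervalIntegrable g volume a x := fun x hx =>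
    (hloc.integrableOn_compact_subset (ordConnected_Ioi.uIcc_subset ha hx)
      isCompact_uIcc).intervalIntegrable
  have hshift : ∀ c > 0, MapsTo (fun v : ℝ => v + c) (Ioi 0) (Ioi 0) := fun c hc v hv =>
    add_pos hv hc
  refine ((hΦ.comp (continuousOn_id.add continuousOn_const) (hshift b hb)).sub
    (hΦ.comp (continuousOn_id.add continuousOn_const) (hshift a ha))).congr fun v hv => ?_
  simp only [intervalIntegral.integral_comp_add_left]
  exact (intervalIntegral.integral_interval_sub_left (hint _ (add_pos hv hb))
    (hint _ (add_pos hv ha))).symm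

theorem ae_add_eq_mul_intervalIntegral_div {g : ℝ → 𝕜} {a b : ℝ} (ha : 0 < a) (hb : 0 < b)
    (hint : ∫ w in a..b, g w ≠ 0)
    (h : ∀ᵐ x : (ℝ × ℝ) × ℝ, 0 < x.1.1 → 0 < x.1.2 → 0 < x.2 →
      g (x.1.1 + x.1.2) * g x.2 = g x.1.1 * g (x.1.2 + x.2)) :
    ∀ᵐ p : ℝ × ℝ, 0 < p.1 → 0 < p.2 →
      g (p.1 + p.2) = g p.1 * ((∫ w in a..b, g (p.2 + w)) / ∫ w in a..b, g w) := by
  filter_upwards [Measure.ae_ae_of_ae_prod h] with p hp hu hv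
  rw [mul_div_assoc', eq_div_iff hint, ← intervalIntegral.integral_const_mul,
    ← intervalIntegral.integral_const_mul]
  refine intervalIntegral.integral_congr_ae (hp.mono fun w hw hmem => hw hu hv ?_)
  exact (lt_min ha hb).trans_le (uIoc_subset_uIcc hmem).1

theorem exists_ae_eq_const_mul_of_ae_add_eq_mul {g H : ℝ → 𝕜} (hH : ContinuousOn H (Ioi 0))
    (hH₀ : ∃ v > 0, H v ≠ 0)
    (h : ∀ᵐ p : ℝ × ℝ, 0 < p.1 → 0 < p.2 → g (p.1 + p.2) = g p.1 * H p.2) :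
    ∃ c : 𝕜, ∀ᵐ u, 0 < u → g u = c * H u := by
  have hsymm : ∀ᵐ p : ℝ × ℝ, 0 < p.1 → 0 < p.2 → g p.1 * H p.2 = H p.1 * g p.2 :=
    (h.and (Measure.measurePreserving_swap.quasiMeasurePreserving.ae h)).mono fun p hp h₁ h₂ => by
      have hswap := hp.2 h₂ h₁
      rw [Prod.fst_swap, Prod.snd_swap, add_comm] at hswap
      linear_combination hswap - hp.1 h₁ h₂
  have hU : IsOpen (Ioi 0 ∩ H ⁻¹' {0}ᶜ) :=
    hH.isOpen_inter_preimage isOpen_Ioi isOpen_compl_singleton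
  obtain ⟨v, hv₀, hHv⟩ := hH₀
  have : (ae (volume.restrict (Ioi 0 ∩ H ⁻¹' {0}ᶜ))).NeBot :=
    ae_restrict_neBot.2 (hU.measure_pos volume ⟨v, hv₀, hHv⟩).ne'
  obtain ⟨v, ⟨hv₀, hHv⟩, hv⟩ := ((ae_restrict_mem hU.measurableSet).and
    (ae_restrict_of_ae (Measure.ae_ae_of_ae_prod hsymm))).exists
  refine ⟨g v / H v, hv.mono fun u hu hu₀ => ?_⟩
  rw [div_mul_eq_mul_div, eq_div_iff hHv, hu hv₀ hu₀, mul_comm]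

theorem forall_add_eq_mul_of_ae_add_eq_mul {g H : ℝ → 𝕜} {c : 𝕜} (hH : ContinuousOn H (Ioi 0))
    (hc : c ≠ 0) (hgc : ∀ᵐ u, 0 < u → g u = c * H u)
    (h : ∀ᵐ p : ℝ × ℝ, 0 < p.1 → 0 < p.2 → g (p.1 + p.2) = g p.1 * H p.2) :
    ∀ u > 0, ∀ v > 0, H (u + v) = H u * H v := by
  have hae : ∀ᵐ p : ℝ × ℝ, p ∈ Ioi 0 ×ˢ Ioi 0 → H (p.1 + p.2) = H p.1 * H p.2 := by
    filter_upwards [h, ae_comp_add hgc, Measure.quasiMeasurePreserving_fst.ae hgc]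
      with p hp hsum hfst ⟨h₁, h₂⟩
    have hp := hp h₁ h₂
    rw [hsum (add_pos h₁ h₂), hfst h₁, mul_assoc] at hp
    exact mul_left_cancel₀ hc hp
  have hU : IsOpen (Ioi (0 : ℝ) ×ˢ Ioi (0 : ℝ)) := isOpen_Ioi.prod isOpen_Ioi
  have hmaps : MapsTo (fun p : ℝ × ℝ => p.1 + p.2) (Ioi 0 ×ˢ Ioi 0) (Ioi 0) :=
    fun p hp => add_pos (mem_Ioi.1 hp.1) hp.2
  have heq := Measure.eqOn_open_of_ae_eq (μ := volume)
    (f := fun p : ℝ × ℝ => H (p.1 + p.2)) (g := fun p => H p.1 * H p.2)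
    ((ae_restrict_iff' hU.measurableSet).2 hae) hU (hH.comp continuous_add.continuousOn hmaps)
    ((hH.comp continuousOn_fst fun p hp => hp.1).mul (hH.comp continuousOn_snd fun p hp => hp.2))
  exact fun u hu v hv => heq (mk_mem_prod hu hv)

end

theorem exists_hasDerivAt_eq_mul_of_add_eq_mul {h : ℝ → ℂ} (hc : ContinuousOn h (Ioi 0))
    (hadd : ∀ u > 0, ∀ v > 0, h (u + v) = h u * h v) {t : ℝ} (ht : 0 < t) (hht : h t ≠ 0) :
    ∃ B : ℂ, ∀ x > 0, HasDerivAt h (B * h x) x := by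
  set Φ : ℝ → ℂ := fun y => ∫ s in t..y, h s
  have hint : ∀ y > 0, IntervalIntegrable h volume t y := fun y hy =>
    (hc.mono (ordConnected_Ioi.uIcc_subset ht hy)).intervalIntegrable
  have hΦ : ∀ y > 0, HasDerivAt Φ (h y) y := fun y hy =>
    intervalIntegral.integral_hasDerivAt_right (hint y hy)
      (hc.stronglyMeasurableAtFilter isOpen_Ioi y hy) (hc.continuousAt (isOpen_Ioi.mem_nhds hy))
  obtain ⟨z, hΦz, hz⟩ : ∃ z, Φ z ≠ 0 ∧ t < z :=
    (((hΦ t ht).eventually_ne hht).filter_mono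
      (nhdsWithin_mono (s := Ioi t) _ fun _ hz => ne_of_gt hz) |>.and self_mem_nhdsWithin).exists
  have hrepr : ∀ x > 0, h x = (Φ (x + z) - Φ (x + t)) / Φ z := by
    intro x hx
    rw [eq_div_iff hΦz]
    calc h x * Φ z = ∫ s in t..z, h (x + s) := by
          rw [← intervalIntegral.integral_const_mul]
          refine intervalIntegral.integral_congr fun s hs => (hadd x hx s ?_).symm
          exact ht.trans_le (le_of_eq_of_le (min_eq_left hz.le).symm hs.1)
      _ = Φ (x + z) - Φ (x + t) := by
          rw [intervalIntegral.integral_comp_add_left, intervalIntegral.integral_interval_sub_left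
            (hint _ (add_pos hx (ht.trans hz))) (hint _ (add_pos hx ht))]
  refine ⟨(h z - h t) / Φ z, fun x hx => ?_⟩
  have hd : HasDerivAt (fun y => (Φ (y + z) - Φ (y + t)) / Φ z)
      ((h (x + z) - h (x + t)) / Φ z) x :=
    (((hΦ _ (add_pos hx (ht.trans hz))).comp_add_const x z).sub
      ((hΦ _ (add_pos hx ht)).comp_add_const x t)).div_const _
  rw [hadd x hx z (ht.trans hz), hadd x hx t ht] at hd
  exact (hd.congr_of_eventuallyEq ((eventually_gt_nhds hx).mono hrepr)).congr_deriv (by ring)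

theorem exists_eq_mul_exp_of_hasDerivAt {h : ℝ → ℂ} {B : ℂ} {s : Set ℝ} (hs : IsOpen s)
    (hs' : IsPreconnected s) (hd : ∀ x ∈ s, HasDerivAt h (B * h x) x) :
    ∃ A : ℂ, ∀ x ∈ s, h x = A * Complex.exp (B * x) := by
  have hφ : ∀ x ∈ s, HasDerivAt (fun y : ℝ => h y * Complex.exp (-B * y)) 0 x := by
    intro x hx
    have he : HasDerivAt (fun y : ℝ => Complex.exp (-B * y)) (Complex.exp (-B * x) * -B) x := by
      simpa using (((hasDerivAt_id x).ofReal_comp).const_mul (-B)).cexp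
    have hprod := (hd x hx).mul he
    rwa [show B * h x * Complex.exp (-B * x) + h x * (Complex.exp (-B * x) * -B) = 0 by ring]
      at hprod
  rcases s.eq_empty_or_nonempty with rfl | ⟨x₀, hx₀⟩
  · exact ⟨0, fun x hx => hx.elim⟩
  refine ⟨h x₀ * Complex.exp (-B * x₀), fun x hx => ?_⟩
  rw [← hs.is_const_of_deriv_eq_zero hs'
    (fun y hy => (hφ y hy).differentiableAt.differentiableWithinAt)
    (fun y hy => (hφ y hy).deriv) hx hx₀, mul_assoc, ← Complex.exp_add]
  simp

theorem exists_eq_mul_exp_of_add_eq_mul {h : ℝ → ℂ} (hc : ContinuousOn h (Ioi 0))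
    (hadd : ∀ u > 0, ∀ v > 0, h (u + v) = h u * h v) :
    ∃ A B : ℂ, ∀ u > 0, h u = A * Complex.exp (B * u) := by
  by_cases h₀ : ∃ t > 0, h t ≠ 0
  · obtain ⟨t, ht, hht⟩ := h₀
    obtain ⟨B, hB⟩ := exists_hasDerivAt_eq_mul_of_add_eq_mul hc hadd ht hht
    obtain ⟨A, hA⟩ := exists_eq_mul_exp_of_hasDerivAt isOpen_Ioi isPreconnected_Ioi hB
    exact ⟨A, B, hA⟩
  · push Not at h₀
    exact ⟨0, 0, fun u hu => by simp [h₀ u hu]⟩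

theorem cauchy_functional_equation_two_fold
    (g K : ℝ → ℂ)
    (hloc : LocallyIntegrableOn g (Set.Ioi 0))
    (hfe : ∀ᵐ p : ℝ × ℝ ∂(volume.restrict ((Set.Ioi 0) ×ˢ (Set.Ioi 0))),
      g p.1 * g p.2 = K (p.1 + p.2))
    (hne : ¬ (g =ᵐ[volume.restrict (Set.Ioi 0)] 0)) :
    ∃ A B : ℂ, ∀ᵐ u ∂(volume.restrict (Set.Ioi (0:ℝ))),
      g u = A * Complex.exp (-B * u) := by
  rw [EventuallyEq, ae_restrict_iff' measurableSet_Ioi] at hne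
  rw [ae_restrict_iff' (measurableSet_Ioi.prod measurableSet_Ioi)] at hfe
  have hassoc := ae_mul_add_eq_mul_add (hfe.mono fun p hp h₁ h₂ => hp ⟨h₁, h₂⟩)
  obtain ⟨a, ha, b, hb, hint⟩ : ∃ a > 0, ∃ b > 0, ∫ t in a..b, g t ≠ 0 := by
    by_contra! h
    exact hne (ae_pos_imp_eq_zero_of_intervalIntegral_eq_zero hloc h)
  set H : ℝ → ℂ := fun v => (∫ w in a..b, g (v + w)) / ∫ w in a..b, g w
  have hH : ContinuousOn H (Ioi 0) :=
    (continuousOn_intervalIntegral_comp_add hloc ha hb).div_const _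
  have hrel : ∀ᵐ p : ℝ × ℝ, 0 < p.1 → 0 < p.2 → g (p.1 + p.2) = g p.1 * H p.2 :=
    ae_add_eq_mul_intervalIntegral_div ha hb hint hassoc
  have hH₀ : ∃ v > 0, H v ≠ 0 := by
    by_contra! h
    exact hne (ae_pos_imp_eq_zero_of_ae_add (hrel.mono fun p hp h₁ h₂ => by
      rw [hp h₁ h₂, h _ h₂, mul_zero]))
  obtain ⟨c, hgc⟩ := exists_ae_eq_const_mul_of_ae_add_eq_mul hH hH₀ hrel
  have hc₀ : c ≠ 0 := by
    rintro rfl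
    exact hne (hgc.mono fun u hu hu₀ => by simpa using hu hu₀)
  obtain ⟨A, B, hAB⟩ :=
    exists_eq_mul_exp_of_add_eq_mul hH (forall_add_eq_mul_of_ae_add_eq_mul hH hc₀ hgc hrel)
  refine ⟨c * A, -B, (ae_restrict_iff' measurableSet_Ioi).2 (hgc.mono fun u hu hu₀ => ?_)⟩
  rw [hu hu₀, hAB u hu₀, neg_neg, mul_assoc]
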